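/- Let n ≥ 5 be an integer. Then every automorphism of F_2(K_{1,n−1}) is induced by an automorphism of K_{1,n−1}; that is, the group homomorphism θ ↦ f_θ from Aut(K_{1,n−1}) to Aut(F_2(K_{1,n−1})) is an isomorphism. In particular, Aut(F_2(K_{1,n−1})) is isomorphic to the symmetric group S_{n−1}. -/

import Mathlib

open scoped symmDiff

/-- The `k`-token graph of a simple graph `G`. -/
def tokenGraph {V : Type*} [DecidableEq V] (G : SimpleGraph V) (k : ℕ) :
    SimpleGraph {s : Finset V // s.card = k} where
  Adj A B := ∃ a b, G.Adj a b ∧ A.val ∆ B.val = {a, b}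
  symm := by
    constructor
    rintro A B ⟨a, b, hab, h⟩
    exact ⟨a, b, hab, by rwa [symmDiff_comm]⟩
  loopless := by
    constructor
    rintro A ⟨a, b, hab, h⟩
    rw [symmDiff_self] at h
    have ha : a ∈ ({a, b} : Finset V) := Finset.mem_insert_self a {b}
    rw [← h] at ha
    simp at ha

/-- The star graph `K_{1,m}`: one center vertex joined to `m` leaves. -/
abbrev starGraph (m : ℕ) : SimpleGraph (Fin 1 ⊕ Fin m) := completeBipartiteGraph (Fin 1) (Fin m)

section General

variable {V : Type*} [DecidableEq V] {G : SimpleGraph V} {k : ℕ}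

lemma token_adj {A B : {s : Finset V // s.card = k}} :
    (tokenGraph G k).Adj A B ↔ ∃ a b, G.Adj a b ∧ A.val ∆ B.val = {a, b} := Iff.rfl

lemma adj_image (θ : G ≃g G) (s t : Finset V)
    (h : ∃ a b, G.Adj a b ∧ s ∆ t = {a, b}) :
    ∃ a b, G.Adj a b ∧ (s.image θ) ∆ (t.image θ) = {a, b} := by
  obtain ⟨a, b, hab, hst⟩ := h
  refine ⟨θ a, θ b, θ.map_adj_iff.mpr hab, ?_⟩
  rw [← Finset.image_symmDiff _ _ θ.injective, hst]
  simp

/-- The equiv on `k`-subsets induced by an automorphism. -/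
def tokenEquivFun (θ : G ≃g G) :
    {s : Finset V // s.card = k} ≃ {s : Finset V // s.card = k} where
  toFun A := ⟨A.val.image θ, by rw [Finset.card_image_of_injective _ θ.injective, A.2]⟩
  invFun A := ⟨A.val.image θ.symm, by rw [Finset.card_image_of_injective _ θ.symm.injective, A.2]⟩
  left_inv A := Subtype.ext (by simp [Finset.image_image, Function.comp_def])
  right_inv A := Subtype.ext (by simp [Finset.image_image, Function.comp_def])

/-- The automorphism of the token graph induced by an automorphism of `G`. -/
def tokenIso (θ : G ≃g G) : tokenGraph G k ≃g tokenGraph G k where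
  toEquiv := tokenEquivFun θ
  map_rel_iff' := by
    intro A B
    constructor
    · intro h
      have h2 := adj_image θ.symm _ _ h
      rw [token_adj]
      simpa [tokenEquivFun, Finset.image_image, Function.comp_def] using h2
    · intro h
      exact adj_image θ _ _ h

/-- The group homomorphism `θ ↦ f_θ`. -/
def tokenHom : (G ≃g G) →* (tokenGraph G k ≃g tokenGraph G k) where
  toFun := tokenIso
  map_one' := DFunLike.ext _ _ fun A => Subtype.ext (by
    change A.val.image (fun x => x) = A.val
    simp)
  map_mul' θ₁ θ₂ := DFunLike.ext _ _ fun A => Subtype.ext (by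
    change A.val.image (fun x => θ₁ (θ₂ x)) = (A.val.image θ₂).image θ₁
    rw [Finset.image_image]
    rfl)

lemma tokenHom_val (θ : G ≃g G) (A : {s : Finset V // s.card = k}) :
    ((tokenHom θ) A).val = A.val.image θ := rfl

end General

section Star

variable {m : ℕ}

local notation "c₀" => (Sum.inl 0 : Fin 1 ⊕ Fin m)

lemma pair_symmDiff {α : Type*} [DecidableEq α] {a b c : α} (hab : a ≠ b) (hac : a ≠ c)
    (hbc : b ≠ c) : ({a, b} : Finset α) ∆ {a, c} = {b, c} := by
  ext x
  by_cases h1 : x = a <;> by_cases h2 : x = b <;> by_cases h3 : x = c <;>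
    simp_all [Finset.mem_symmDiff]

lemma star_adj01 (j : Fin m) : (starGraph m).Adj c₀ (Sum.inr j) := by simp

lemma token_star_adj {A B : {s : Finset (Fin 1 ⊕ Fin m) // s.card = 2}} :
    (tokenGraph (starGraph m) 2).Adj A B ↔
      ∃ j : Fin m, A.val ∆ B.val = {c₀, Sum.inr j} := by
  constructor
  · rintro ⟨a, b, hab, h⟩
    rcases a with a | a <;> rcases b with b | b
    · simp at hab
    · exact ⟨b, by rwa [Subsingleton.elim a 0] at h⟩
    · refine ⟨a, ?_⟩
      rw [Subsingleton.elim b 0] at h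
      rwa [Finset.pair_comm] at h
    · simp at hab
  · rintro ⟨j, h⟩
    exact ⟨c₀, Sum.inr j, star_adj01 j, h⟩

/-- The "center" token vertex `{c, ℓ}`. -/
def cvx (j : Fin m) : {s : Finset (Fin 1 ⊕ Fin m) // s.card = 2} :=
  ⟨{c₀, Sum.inr j}, Finset.card_pair (by simp)⟩

/-- The "leaf-pair" token vertex `{ℓ, ℓ'}`. -/
def evx (j k : Fin m) (h : j ≠ k) : {s : Finset (Fin 1 ⊕ Fin m) // s.card = 2} :=
  ⟨{Sum.inr j, Sum.inr k}, Finset.card_pair (by simp [h])⟩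

lemma cvx_inj {a b : Fin m} (h : cvx a = cvx b) : a = b := by
  have hv := Subtype.ext_iff.mp h
  have ha : (Sum.inr a : Fin 1 ⊕ Fin m) ∈ (cvx a).val := by simp [cvx]
  rw [hv] at ha
  simpa [cvx] using ha

lemma eq_cvx_of_mem {B : {s : Finset (Fin 1 ⊕ Fin m) // s.card = 2}} {k : Fin m}
    (h0 : c₀ ∈ B.val) (hk : Sum.inr k ∈ B.val) : B = cvx k := by
  refine Subtype.ext ?_
  refine (Finset.eq_of_subset_of_card_le ?_ ?_).symm
  · intro x hx
    simp only [cvx, Finset.mem_insert, Finset.mem_singleton] at hx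
    rcases hx with rfl | rfl <;> assumption
  · rw [B.2]
    exact le_of_eq (cvx k).2.symm

lemma eq_cvx {A : {s : Finset (Fin 1 ⊕ Fin m) // s.card = 2}} (h : c₀ ∈ A.val) :
    ∃ j, A = cvx j := by
  obtain ⟨x, y, hxy, hs⟩ := Finset.card_eq_two.mp A.2
  have hx : x ∈ A.val := by rw [hs]; simp
  have hy : y ∈ A.val := by rw [hs]; simp
  have : x = c₀ ∨ y = c₀ := by
    rw [hs] at h
    simp only [Finset.mem_insert, Finset.mem_singleton] at h
    exact h.imp Eq.symm Eq.symm
  rcases this with rfl | rfl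
  · rcases y with a | j
    · exact absurd (by rw [Subsingleton.elim a 0]) hxy.symm
    · exact ⟨j, eq_cvx_of_mem hx hy⟩
  · rcases x with a | j
    · exact absurd (by rw [Subsingleton.elim a 0]) hxy
    · exact ⟨j, eq_cvx_of_mem hy hx⟩

lemma noncenter_form {A : {s : Finset (Fin 1 ⊕ Fin m) // s.card = 2}} (h : c₀ ∉ A.val) :
    ∃ j k, j ≠ k ∧ A.val = {Sum.inr j, Sum.inr k} := by
  obtain ⟨x, y, hxy, hs⟩ := Finset.card_eq_two.mp A.2
  have hx : x ∈ A.val := by rw [hs]; simp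
  have hy : y ∈ A.val := by rw [hs]; simp
  rcases x with a | j
  · rw [Subsingleton.elim a 0] at hx; exact absurd hx h
  rcases y with a | k
  · rw [Subsingleton.elim a 0] at hy; exact absurd hy h
  exact ⟨j, k, fun hjk => hxy (by rw [hjk]), hs⟩

lemma evx_ne {j a b : Fin m} (hja : j ≠ a) (hjb : j ≠ b) (hab : a ≠ b) :
    evx j a hja ≠ evx j b hjb := by
  intro h
  have hv := Subtype.ext_iff.mp h
  have ha : (Sum.inr a : Fin 1 ⊕ Fin m) ∈ (evx j a hja).val := by simp [evx]
  rw [hv] at ha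
  simp only [evx, Finset.mem_insert, Finset.mem_singleton, Sum.inr.injEq] at ha
  rcases ha with ha | ha
  · exact hja ha.symm
  · exact hab ha

lemma not_adj_center {A B : {s : Finset (Fin 1 ⊕ Fin m) // s.card = 2}}
    (hA : c₀ ∈ A.val) (hB : c₀ ∈ B.val) : ¬ (tokenGraph (starGraph m) 2).Adj A B := by
  intro h
  obtain ⟨j, hj⟩ := token_star_adj.mp h
  have : c₀ ∈ A.val ∆ B.val := by rw [hj]; simp
  rw [Finset.mem_symmDiff] at this
  tauto

lemma adj_cvx_evx {j a : Fin m} (h : j ≠ a) :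
    (tokenGraph (starGraph m) 2).Adj (cvx j) (evx j a h) := by
  rw [token_star_adj]
  refine ⟨a, ?_⟩
  show ({c₀, Sum.inr j} : Finset _) ∆ {Sum.inr j, Sum.inr a} = {c₀, Sum.inr a}
  rw [Finset.pair_comm c₀ (Sum.inr j)]
  exact pair_symmDiff (by simp) (by simp [h]) (by simp)

lemma nbr_noncenter {j k : Fin m} {A B : {s : Finset (Fin 1 ⊕ Fin m) // s.card = 2}}
    (hjk : j ≠ k) (hA : A.val = {Sum.inr j, Sum.inr k})
    (hadj : (tokenGraph (starGraph m) 2).Adj A B) : B = cvx j ∨ B = cvx k := by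
  obtain ⟨l, h⟩ := token_star_adj.mp hadj
  have hcA : c₀ ∉ A.val := by rw [hA]; simp
  have hcB : c₀ ∈ B.val := by
    have : c₀ ∈ A.val ∆ B.val := by rw [h]; simp
    rw [Finset.mem_symmDiff] at this; tauto
  by_cases hlj : l = j
  · subst hlj
    have hkB : Sum.inr k ∈ B.val := by
      have h1 : (Sum.inr k : Fin 1 ⊕ Fin m) ∈ A.val := by rw [hA]; simp
      have h2 : (Sum.inr k : Fin 1 ⊕ Fin m) ∉ A.val ∆ B.val := by
        rw [h]; intro hmem; simp at hmem; exact hjk hmem.symm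
      rw [Finset.mem_symmDiff] at h2; tauto
    exact Or.inr (eq_cvx_of_mem hcB hkB)
  by_cases hlk : l = k
  · subst hlk
    have hjB : Sum.inr j ∈ B.val := by
      have h1 : (Sum.inr j : Fin 1 ⊕ Fin m) ∈ A.val := by rw [hA]; simp
      have h2 : (Sum.inr j : Fin 1 ⊕ Fin m) ∉ A.val ∆ B.val := by
        rw [h]; intro hmem; simp at hmem; exact hjk hmem
      rw [Finset.mem_symmDiff] at h2; tauto
    exact Or.inl (eq_cvx_of_mem hcB hjB)
  · exfalso
    have hjB : Sum.inr j ∈ B.val := by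
      have h1 : (Sum.inr j : Fin 1 ⊕ Fin m) ∈ A.val := by rw [hA]; simp
      have h2 : (Sum.inr j : Fin 1 ⊕ Fin m) ∉ A.val ∆ B.val := by
        rw [h]; intro hmem; simp at hmem; exact hlj hmem.symm
      rw [Finset.mem_symmDiff] at h2; tauto
    have hkB : Sum.inr k ∈ B.val := by
      have h1 : (Sum.inr k : Fin 1 ⊕ Fin m) ∈ A.val := by rw [hA]; simp
      have h2 : (Sum.inr k : Fin 1 ⊕ Fin m) ∉ A.val ∆ B.val := by
        rw [h]; intro hmem; simp at hmem; exact hlk hmem.symm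
      rw [Finset.mem_symmDiff] at h2; tauto
    have : 2 < B.val.card := by
      rw [Finset.two_lt_card]
      exact ⟨c₀, hcB, Sum.inr j, hjB, Sum.inr k, hkB, by simp, by simp, by simp [hjk]⟩
    rw [B.2] at this
    omega

lemma center_three (hm : 4 ≤ m) {A : {s : Finset (Fin 1 ⊕ Fin m) // s.card = 2}}
    (hA : c₀ ∈ A.val) :
    ∃ B₁ B₂ B₃, (tokenGraph (starGraph m) 2).Adj A B₁ ∧
      (tokenGraph (starGraph m) 2).Adj A B₂ ∧ (tokenGraph (starGraph m) 2).Adj A B₃ ∧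
      B₁ ≠ B₂ ∧ B₁ ≠ B₃ ∧ B₂ ≠ B₃ := by
  obtain ⟨j, rfl⟩ := eq_cvx hA
  have hcard : 2 < (Finset.univ.erase j).card := by
    rw [Finset.card_erase_of_mem (Finset.mem_univ j), Finset.card_univ, Fintype.card_fin]
    omega
  obtain ⟨a, ha, b, hb, c, hc, hab, hac, hbc⟩ := Finset.two_lt_card.mp hcard
  have hja : j ≠ a := (Finset.ne_of_mem_erase ha).symm
  have hjb : j ≠ b := (Finset.ne_of_mem_erase hb).symm
  have hjc : j ≠ c := (Finset.ne_of_mem_erase hc).symm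
  exact ⟨evx j a hja, evx j b hjb, evx j c hjc, adj_cvx_evx hja, adj_cvx_evx hjb,
    adj_cvx_evx hjc, evx_ne hja hjb hab, evx_ne hja hjc hac, evx_ne hjb hjc hbc⟩

lemma g_center (hm : 4 ≤ m)
    (g : tokenGraph (starGraph m) 2 ≃g tokenGraph (starGraph m) 2)
    {A : {s : Finset (Fin 1 ⊕ Fin m) // s.card = 2}} (hA : c₀ ∈ A.val) :
    c₀ ∈ (g A).val := by
  by_contra hc
  obtain ⟨j, k, hjk, hval⟩ := noncenter_form hc
  obtain ⟨B₁, B₂, B₃, h1, h2, h3, d12, d13, d23⟩ := center_three hm hA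
  have n1 := nbr_noncenter hjk hval (g.map_rel_iff.mpr h1)
  have n2 := nbr_noncenter hjk hval (g.map_rel_iff.mpr h2)
  have n3 := nbr_noncenter hjk hval (g.map_rel_iff.mpr h3)
  have key : g B₁ = g B₂ ∨ g B₁ = g B₃ ∨ g B₂ = g B₃ := by
    rcases n1 with h1'|h1' <;> rcases n2 with h2'|h2' <;> rcases n3 with h3'|h3' <;>
      simp [h1', h2', h3']
  rcases key with h | h | h
  · exact d12 (g.injective h)
  · exact d13 (g.injective h)
  · exact d23 (g.injective h)

lemma g_noncenter (hm : 4 ≤ m)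
    (g : tokenGraph (starGraph m) 2 ≃g tokenGraph (starGraph m) 2)
    {A : {s : Finset (Fin 1 ⊕ Fin m) // s.card = 2}} (hA : c₀ ∉ A.val) :
    c₀ ∉ (g A).val := by
  intro hc
  have := g_center hm g.symm hc
  rw [g.symm_apply_apply] at this
  exact hA this

/-- Star automorphism from a permutation of the leaves. -/
def permToStar (e : Equiv.Perm (Fin m)) : starGraph m ≃g starGraph m where
  toEquiv := Equiv.sumCongr (Equiv.refl _) e
  map_rel_iff' := by
    intro a b
    rcases a with a | a <;> rcases b with b | b <;> simp

def permToStarHom : Equiv.Perm (Fin m) →* (starGraph m ≃g starGraph m) where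
  toFun := permToStar
  map_one' := by
    ext x
    rcases x with a | a <;> rfl
  map_mul' e₁ e₂ := by
    ext x
    rcases x with a | a <;> rfl

lemma theta_inl (hm : 2 ≤ m) (θ : starGraph m ≃g starGraph m) : θ c₀ = c₀ := by
  rcases hθ : θ c₀ with x | j
  · rw [Subsingleton.elim x 0]
  · exfalso
    have h0 : 0 < m := by omega
    have h1 : 1 < m := by omega
    let a : Fin m := ⟨0, h0⟩
    let b : Fin m := ⟨1, h1⟩
    have hab : a ≠ b := by
      intro hh
      have := congrArg Fin.val hh
      simp [a, b] at this
    have h1 : (starGraph m).Adj (θ c₀) (θ (Sum.inr a)) := θ.map_adj_iff.mpr (star_adj01 a)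
    have h2 : (starGraph m).Adj (θ c₀) (θ (Sum.inr b)) := θ.map_adj_iff.mpr (star_adj01 b)
    rw [hθ] at h1 h2
    rcases ha' : θ (Sum.inr a) with x | y
    · rcases hb' : θ (Sum.inr b) with x' | y'
      · have : θ (Sum.inr a) = θ (Sum.inr b) := by
          rw [ha', hb', Subsingleton.elim x x']
        exact hab (by simpa using θ.injective this)
      · rw [hb'] at h2; simp at h2
    · rw [ha'] at h1; simp at h1

lemma theta_inr (hm : 2 ≤ m) (θ : starGraph m ≃g starGraph m) (j : Fin m) :
    ∃ k, θ (Sum.inr j) = Sum.inr k := by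
  rcases hθ : θ (Sum.inr j) with x | k
  · exfalso
    have : θ (Sum.inr j) = θ c₀ := by
      rw [hθ, theta_inl hm θ, Subsingleton.elim x 0]
    simpa using θ.injective this
  · exact ⟨k, rfl⟩

lemma permToStarHom_bijective (hm : 2 ≤ m) : Function.Bijective (permToStarHom (m := m)) := by
  constructor
  · intro e₁ e₂ h
    ext j
    have h2 := DFunLike.congr_fun h (Sum.inr j)
    simp only [permToStarHom, permToStar, MonoidHom.coe_mk, OneHom.coe_mk] at h2
    have h3 : e₁ j = e₂ j := by simpa using h2
    exact congrArg Fin.val h3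
  · intro θ
    have hinj : Function.Injective (fun j => (theta_inr hm θ j).choose) := by
      intro a b hab
      have ha := (theta_inr hm θ a).choose_spec
      have hb := (theta_inr hm θ b).choose_spec
      have : θ (Sum.inr a) = θ (Sum.inr b) := by rw [ha, hb]; exact congrArg _ hab
      simpa using θ.injective this
    refine ⟨Equiv.ofBijective _ (Finite.injective_iff_bijective.mp hinj), ?_⟩
    ext x
    rcases x with a | j
    · show (Sum.inl a : Fin 1 ⊕ Fin m) = θ (Sum.inl a)
      rw [Subsingleton.elim a 0, theta_inl hm θ]
    · exact ((theta_inr hm θ j).choose_spec).symm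

lemma tokenHom_bijective (hm : 4 ≤ m) :
    Function.Bijective (tokenHom : (starGraph m ≃g starGraph m) →*
      (tokenGraph (starGraph m) 2 ≃g tokenGraph (starGraph m) 2)) := by
  have hm2 : 2 ≤ m := by omega
  constructor
  · rw [injective_iff_map_eq_one]
    intro θ h
    ext x
    rcases x with a | j
    · show θ (Sum.inl a) = Sum.inl a
      rw [Subsingleton.elim a 0]
      exact theta_inl hm2 θ
    · show θ (Sum.inr j) = Sum.inr j
      have hA := Subtype.ext_iff.mp (DFunLike.congr_fun h (cvx j))
      have : (cvx j).val.image θ = (cvx j).val := hA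
      have hmem : θ (Sum.inr j) ∈ (cvx j).val := by
        rw [← this]
        exact Finset.mem_image_of_mem _ (by simp [cvx])
      simp only [cvx, Finset.mem_insert, Finset.mem_singleton] at hmem
      rcases hmem with hmem | hmem
      · exfalso
        have : θ (Sum.inr j) = θ c₀ := by rw [hmem, theta_inl hm2 θ]
        simpa using θ.injective this
      · exact hmem
  · intro g
    set σ : Fin m → Fin m := fun j => (eq_cvx (g_center hm g
      (show c₀ ∈ (cvx j).val by simp [cvx]))).choose with hσ
    have hgs : ∀ j : Fin m, g (cvx j) = cvx (σ j) := fun j =>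
      (eq_cvx (g_center hm g (show c₀ ∈ (cvx j).val by simp [cvx]))).choose_spec
    have hinj : Function.Injective σ := by
      intro a b hab
      have : g (cvx a) = g (cvx b) := by rw [hgs, hgs, hab]
      exact cvx_inj (g.injective this)
    set e := Equiv.ofBijective σ (Finite.injective_iff_bijective.mp hinj) with he
    have hσe : ∀ j, e j = σ j := fun j => rfl
    refine ⟨permToStar e, ?_⟩
    refine DFunLike.ext _ _ fun A => Subtype.ext ?_
    show A.val.image (permToStar e) = (g A).val
    by_cases hc : c₀ ∈ A.val
    · obtain ⟨j, rfl⟩ := eq_cvx hc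
      rw [hgs j]
      show ({c₀, Sum.inr j} : Finset _).image (permToStar e) = (cvx (σ j)).val
      rw [Finset.image_insert, Finset.image_singleton]
      rfl
    · obtain ⟨j, k, hjk, hval⟩ := noncenter_form hc
      have hgc : c₀ ∉ (g A).val := g_noncenter hm g hc
      obtain ⟨p, q, hpq, hgval⟩ := noncenter_form hgc
      have hadjj : (tokenGraph (starGraph m) 2).Adj A (cvx j) := by
        rw [token_adj]
        refine ⟨c₀, Sum.inr k, star_adj01 k, ?_⟩
        rw [hval]
        show ({Sum.inr j, Sum.inr k} : Finset _) ∆ {c₀, Sum.inr j} = {c₀, Sum.inr k}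
        rw [Finset.pair_comm c₀ (Sum.inr j), Finset.pair_comm c₀ (Sum.inr k)]
        exact pair_symmDiff (by simp [hjk]) (by simp) (by simp)
      have hadjk : (tokenGraph (starGraph m) 2).Adj A (cvx k) := by
        rw [token_adj]
        refine ⟨c₀, Sum.inr j, star_adj01 j, ?_⟩
        rw [hval, Finset.pair_comm (Sum.inr j) (Sum.inr k)]
        show ({Sum.inr k, Sum.inr j} : Finset _) ∆ {c₀, Sum.inr k} = {c₀, Sum.inr j}
        rw [Finset.pair_comm c₀ (Sum.inr k), Finset.pair_comm c₀ (Sum.inr j)]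
        exact pair_symmDiff (by simp [Ne.symm hjk]) (by simp) (by simp)
      have hj' : (tokenGraph (starGraph m) 2).Adj (g A) (cvx (σ j)) := by
        rw [← hgs j]; exact g.map_rel_iff.mpr hadjj
      have hk' : (tokenGraph (starGraph m) 2).Adj (g A) (cvx (σ k)) := by
        rw [← hgs k]; exact g.map_rel_iff.mpr hadjk
      have hnj := nbr_noncenter hpq hgval hj'
      have hnk := nbr_noncenter hpq hgval hk'
      have hσjk : σ j ≠ σ k := fun h => hjk (hinj h)
      have himg : A.val.image (permToStar e) = {Sum.inr (σ j), Sum.inr (σ k)} := by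
        rw [hval, Finset.image_insert, Finset.image_singleton]
        rfl
      rw [himg, hgval]
      rcases hnj with hnj | hnj <;> rcases hnk with hnk | hnk
      · exact absurd (cvx_inj (hnj.trans hnk.symm)) hσjk
      · rw [cvx_inj hnj, cvx_inj hnk]
      · rw [cvx_inj hnj, cvx_inj hnk, Finset.pair_comm]
      · exact absurd (cvx_inj (hnj.trans hnk.symm)) hσjk

end Star

/-- For `n ≥ 5`, every automorphism of `F_2(K_{1,n-1})` is induced by an automorphism of
the star `K_{1,n-1}`: the group homomorphism `θ ↦ f_θ` (where `f_θ(A) = θ '' A`) is a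
group isomorphism from `Aut(K_{1,n-1})` to `Aut(F_2(K_{1,n-1}))`; in particular
`Aut(F_2(K_{1,n-1}))` is isomorphic to the symmetric group `S_{n-1}`. -/
theorem stmt_4 (n : ℕ) (hn : 5 ≤ n) :
    (∃ φ : (starGraph (n - 1) ≃g starGraph (n - 1)) ≃*
        (tokenGraph (starGraph (n - 1)) 2 ≃g tokenGraph (starGraph (n - 1)) 2),
      ∀ (θ : starGraph (n - 1) ≃g starGraph (n - 1))
        (A : {s : Finset (Fin 1 ⊕ Fin (n - 1)) // s.card = 2}),
        ((φ θ) A).val = A.val.image θ) ∧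
    Nonempty ((tokenGraph (starGraph (n - 1)) 2 ≃g tokenGraph (starGraph (n - 1)) 2) ≃*
      Equiv.Perm (Fin (n - 1))) := by
  have hm : 4 ≤ n - 1 := by omega
  have hm2 : 2 ≤ n - 1 := by omega
  refine ⟨⟨MulEquiv.ofBijective tokenHom (tokenHom_bijective hm), fun θ A => rfl⟩, ?_⟩
  exact ⟨(MulEquiv.ofBijective tokenHom (tokenHom_bijective hm)).symm.trans
    (MulEquiv.ofBijective permToStarHom (permToStarHom_bijective hm2)).symm⟩
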